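/- (Corollary 1) Let H = H₁ ⊗ H₂. For sparsity level s ≥ 1, the RIP constant of order s of H satisfies δ_s(H) ≤ max_{1 ≤ s₁ ≤ s} (1 + δ_{s₁}(H₁))(1 + δ_{s+1−s₁}(H₂)) − 1, where δ_k(·) denotes the RIP constant of order k. -/
import Mathlib

open Matrix
open scoped Kronecker

/-- Squared Euclidean norm. -/
noncomputable def sqnorm {ι : Type*} [Fintype ι] (v : ι → ℝ) : ℝ := ∑ i, (v i) ^ 2

/-- Squared Frobenius norm. -/
noncomputable def frob {ι κ : Type*} [Fintype ι] [Fintype κ] (A : Matrix ι κ ℝ) : ℝ :=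
  ∑ i, ∑ j, (A i j) ^ 2

/-- Number of nonzero entries (the ℓ₀ "norm"). -/
noncomputable def spars {ι : Type*} (v : ι → ℝ) : ℕ := Set.ncard {i | v i ≠ 0}

/-- `A` satisfies the RIP of order `s` with constant `δ`. -/
def RIPwith {m n : Type*} [Fintype m] [Fintype n] (A : Matrix m n ℝ) (s : ℕ) (δ : ℝ) : Prop :=
  ∀ v : n → ℝ, spars v ≤ s →
    (1 - δ) * sqnorm v ≤ sqnorm (A.mulVec v) ∧ sqnorm (A.mulVec v) ≤ (1 + δ) * sqnorm v

/-- The RIP constant of order `s`: the smallest nonnegative `δ` satisfying the RIP. -/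
noncomputable def RIC {m n : Type*} [Fintype m] [Fintype n] (A : Matrix m n ℝ) (s : ℕ) : ℝ :=
  sInf {δ : ℝ | 0 ≤ δ ∧ RIPwith A s δ}

/-- The `S`-RIP constant of `H` for a set `S` of vectors. -/
noncomputable def SRIC {m n : Type*} [Fintype m] [Fintype n] (H : Matrix m n ℝ)
    (S : Set (n → ℝ)) : ℝ :=
  sInf {δ : ℝ | 0 ≤ δ ∧ ∀ x ∈ S,
    (1 - δ) * sqnorm x ≤ sqnorm (H.mulVec x) ∧ sqnorm (H.mulVec x) ≤ (1 + δ) * sqnorm x}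

open scoped Classical in
lemma spars_eq_card {ι : Type*} [Fintype ι] (v : ι → ℝ) :
    spars v = (Finset.univ.filter (fun i => v i ≠ 0)).card := by
  rw [spars, show {i | v i ≠ 0} = ↑(Finset.univ.filter (fun i => v i ≠ 0)) from by
    ext i; simp, Set.ncard_coe_finset]

lemma sqnorm_nonneg {ι : Type*} [Fintype ι] (v : ι → ℝ) : 0 ≤ sqnorm v :=
  Finset.sum_nonneg fun _ _ => sq_nonneg _

theorem RIC_kronecker_standard_sparsity {M₁ N₁ M₂ N₂ : ℕ}
    (H₁ : Matrix (Fin M₁) (Fin N₁) ℝ) (H₂ : Matrix (Fin M₂) (Fin N₂) ℝ)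
    (s : ℕ) (hs : 1 ≤ s)
    (h₁ : ∀ s₁ ∈ Finset.Icc 1 s,
      RIC H₁ s₁ ∈ Set.Ioo (0:ℝ) 1 ∧ RIPwith H₁ s₁ (RIC H₁ s₁))
    (h₂ : ∀ s₁ ∈ Finset.Icc 1 s,
      RIC H₂ (s + 1 - s₁) ∈ Set.Ioo (0:ℝ) 1 ∧ RIPwith H₂ (s + 1 - s₁) (RIC H₂ (s + 1 - s₁))) :
    RIC (H₁ ⊗ₖ H₂) s ≤
      (Finset.Icc 1 s).sup' (Finset.nonempty_Icc.mpr hs)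
        (fun s₁ => (1 + RIC H₁ s₁) * (1 + RIC H₂ (s + 1 - s₁)) - 1) := by
  classical
  have hne : (Finset.Icc 1 s).Nonempty := Finset.nonempty_Icc.mpr hs
  set D : ℝ := (Finset.Icc 1 s).sup' hne
      (fun s₁ => (1 + RIC H₁ s₁) * (1 + RIC H₂ (s + 1 - s₁)) - 1) with hDdef
  have h1s : (1 : ℕ) ∈ Finset.Icc 1 s := by simp [hs]
  have hD0 : 0 ≤ D := by
    have hD1 : (1 + RIC H₁ 1) * (1 + RIC H₂ (s + 1 - 1)) - 1 ≤ D :=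
      Finset.le_sup' (fun s₁ => (1 + RIC H₁ s₁) * (1 + RIC H₂ (s + 1 - s₁)) - 1) h1s
    obtain ⟨⟨ha0, ha1⟩, -⟩ := h₁ 1 h1s
    obtain ⟨⟨hb0, hb1⟩, -⟩ := h₂ 1 h1s
    nlinarith
  apply csInf_le ⟨0, fun x hx => hx.1⟩
  refine ⟨hD0, ?_⟩
  intro v hv
  have hHv0 : 0 ≤ sqnorm v := sqnorm_nonneg v
  by_cases hv0 : v = 0
  · subst hv0
    constructor <;> simp [sqnorm, Matrix.mulVec_zero]
  -- the matrix of rows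
  set row : Fin N₁ → Fin N₂ → ℝ := fun j₁ j₂ => v (j₁, j₂) with hrowdef
  set R : Finset (Fin N₁) := Finset.univ.filter (fun j₁ => row j₁ ≠ 0) with hRdef
  have hsum : spars v = ∑ j₁, spars (row j₁) := by
    rw [spars_eq_card, Finset.card_filter, Fintype.sum_prod_type]
    exact Finset.sum_congr rfl fun j₁ _ => by
      rw [spars_eq_card, Finset.card_filter]
  have hrow_pos : ∀ j₁ ∈ R, 1 ≤ spars (row j₁) := by
    intro j₁ hj
    rw [hRdef, Finset.mem_filter] at hj
    obtain ⟨j₂, hj₂⟩ := Function.ne_iff.mp hj.2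
    rw [spars_eq_card]
    refine Finset.card_pos.mpr ⟨j₂, ?_⟩
    simpa using hj₂
  have hrow_zero : ∀ j₁, j₁ ∉ R → row j₁ = 0 := by
    intro j₁ hj
    rw [hRdef, Finset.mem_filter] at hj
    push_neg at hj
    exact hj (Finset.mem_univ j₁)
  have hr_le : R.card ≤ spars v := by
    calc R.card = ∑ _j₁ ∈ R, 1 := by simp
      _ ≤ ∑ j₁ ∈ R, spars (row j₁) := Finset.sum_le_sum hrow_pos
      _ ≤ ∑ j₁, spars (row j₁) :=
          Finset.sum_le_sum_of_subset (Finset.subset_univ R)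
      _ = spars v := hsum.symm
  have hR_ne : R.Nonempty := by
    obtain ⟨p, hp⟩ := Function.ne_iff.mp hv0
    refine ⟨p.1, ?_⟩
    rw [hRdef, Finset.mem_filter]
    exact ⟨Finset.mem_univ _, Function.ne_iff.mpr ⟨p.2, hp⟩⟩
  have hr1 : 1 ≤ R.card := Finset.card_pos.mpr hR_ne
  have hrs : R.card ≤ s := le_trans hr_le hv
  have hmem : R.card ∈ Finset.Icc 1 s := Finset.mem_Icc.mpr ⟨hr1, hrs⟩
  have hrow_spars : ∀ j₁, spars (row j₁) ≤ s + 1 - R.card := by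
    intro j₁
    by_cases hj : j₁ ∈ R
    · have key : spars (row j₁) + (R.card - 1) ≤ spars v := by
        calc spars (row j₁) + (R.card - 1)
            = spars (row j₁) + ∑ _x ∈ R.erase j₁, 1 := by
              simp [Finset.card_erase_of_mem hj]
          _ ≤ spars (row j₁) + ∑ x ∈ R.erase j₁, spars (row x) := by
              gcongr with x hx
              exact hrow_pos x (Finset.mem_of_mem_erase hx)
          _ = ∑ x ∈ R, spars (row x) := Finset.add_sum_erase R (fun x => spars (row x)) hj
          _ ≤ ∑ x, spars (row x) :=
              Finset.sum_le_sum_of_subset (Finset.subset_univ R)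
          _ = spars v := hsum.symm
      omega
    · have : row j₁ = 0 := hrow_zero j₁ hj
      rw [spars_eq_card]
      simp [this]
  obtain ⟨⟨hd₁0, hd₁1⟩, hRIP₁⟩ := h₁ R.card hmem
  obtain ⟨⟨hd₂0, hd₂1⟩, hRIP₂⟩ := h₂ R.card hmem
  have hDr : (1 + RIC H₁ R.card) * (1 + RIC H₂ (s + 1 - R.card)) - 1 ≤ D :=
    Finset.le_sup' (fun s₁ => (1 + RIC H₁ s₁) * (1 + RIC H₂ (s + 1 - s₁)) - 1) hmem
  set δ₁ := RIC H₁ R.card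
  set δ₂ := RIC H₂ (s + 1 - R.card)
  -- the columns of H₂ applied to rows
  set col : Fin M₂ → Fin N₁ → ℝ := fun i₂ j₁ => (H₂.mulVec (row j₁)) i₂ with hcoldef
  have hcol_spars : ∀ i₂, spars (col i₂) ≤ R.card := by
    intro i₂
    rw [spars_eq_card]
    apply Finset.card_le_card
    intro j₁ hj
    rw [Finset.mem_filter] at hj
    rw [hRdef, Finset.mem_filter]
    refine ⟨Finset.mem_univ _, ?_⟩
    intro h0
    exact hj.2 (by simp [hcoldef, h0, Matrix.mulVec_zero])
  have hmv : ∀ i₁ i₂, ((H₁ ⊗ₖ H₂).mulVec v) (i₁, i₂) = (H₁.mulVec (col i₂)) i₁ := by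
    intro i₁ i₂
    simp only [Matrix.mulVec, dotProduct, Matrix.kroneckerMap_apply, hcoldef,
      Fintype.sum_prod_type, Finset.mul_sum]
    exact Finset.sum_congr rfl fun j₁ _ => Finset.sum_congr rfl fun j₂ _ => by ring
  have key : sqnorm ((H₁ ⊗ₖ H₂).mulVec v) = ∑ i₂, sqnorm (H₁.mulVec (col i₂)) := by
    simp only [sqnorm, Fintype.sum_prod_type]
    rw [Finset.sum_comm]
    exact Finset.sum_congr rfl fun i₂ _ => Finset.sum_congr rfl fun i₁ _ => by rw [hmv]
  have hexch : ∑ i₂, sqnorm (col i₂) = ∑ j₁, sqnorm (H₂.mulVec (row j₁)) := by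
    simp only [sqnorm, hcoldef]
    exact Finset.sum_comm
  have hvnorm : sqnorm v = ∑ j₁, sqnorm (row j₁) := by
    simp only [sqnorm, hrowdef, Fintype.sum_prod_type]
  have hup2 : ∑ j₁, sqnorm (H₂.mulVec (row j₁)) ≤ (1 + δ₂) * sqnorm v := by
    rw [hvnorm, Finset.mul_sum]
    exact Finset.sum_le_sum fun j₁ _ => (hRIP₂ (row j₁) (hrow_spars j₁)).2
  have hlo2 : (1 - δ₂) * sqnorm v ≤ ∑ j₁, sqnorm (H₂.mulVec (row j₁)) := by
    rw [hvnorm, Finset.mul_sum]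
    exact Finset.sum_le_sum fun j₁ _ => (hRIP₂ (row j₁) (hrow_spars j₁)).1
  have hup1 : sqnorm ((H₁ ⊗ₖ H₂).mulVec v) ≤ (1 + δ₁) * ∑ i₂, sqnorm (col i₂) := by
    rw [key, Finset.mul_sum]
    exact Finset.sum_le_sum fun i₂ _ => (hRIP₁ (col i₂) (hcol_spars i₂)).2
  have hlo1 : (1 - δ₁) * ∑ i₂, sqnorm (col i₂) ≤ sqnorm ((H₁ ⊗ₖ H₂).mulVec v) := by
    rw [key, Finset.mul_sum]
    exact Finset.sum_le_sum fun i₂ _ => (hRIP₁ (col i₂) (hcol_spars i₂)).1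
  constructor
  · calc (1 - D) * sqnorm v ≤ (1 - δ₁) * ((1 - δ₂) * sqnorm v) := by nlinarith
      _ ≤ (1 - δ₁) * ∑ j₁, sqnorm (H₂.mulVec (row j₁)) := by
          apply mul_le_mul_of_nonneg_left hlo2 (by linarith)
      _ = (1 - δ₁) * ∑ i₂, sqnorm (col i₂) := by rw [hexch]
      _ ≤ sqnorm ((H₁ ⊗ₖ H₂).mulVec v) := hlo1
  · calc sqnorm ((H₁ ⊗ₖ H₂).mulVec v) ≤ (1 + δ₁) * ∑ i₂, sqnorm (col i₂) := hup1
      _ = (1 + δ₁) * ∑ j₁, sqnorm (H₂.mulVec (row j₁)) := by rw [hexch]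
      _ ≤ (1 + δ₁) * ((1 + δ₂) * sqnorm v) := by
          apply mul_le_mul_of_nonneg_left hup2 (by linarith)
      _ ≤ (1 + D) * sqnorm v := by nlinarith
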